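/- arXiv:1704.07253 — 2 statements merged into one kernel-verified Lean document; each statement's English description precedes it below -/
import Mathlib

section
/- Let Ω ⊂ ℝⁿ be open and bounded and let E be a Cheeger set of Ω. Then E has variational curvature bounded above by the constant function h(Ω): for every ball B_ρ(x₀) and every measurable F ⊆ E with F Δ E compactly contained in B_ρ(x₀), one has P(E; B_ρ(x₀)) ≤ P(F; B_ρ(x₀)) + h(Ω)·|E \ F|. -/
open MeasureTheory Metric Set ENNReal

variable {n : ℕ}

/-- Divergence of a vector field on `ℝⁿ`. -/
noncomputable def vdiv (φ : EuclideanSpace ℝ (Fin n) → EuclideanSpace ℝ (Fin n))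
    (x : EuclideanSpace ℝ (Fin n)) : ℝ :=
  ∑ i : Fin n, fderiv ℝ φ x (EuclideanSpace.single i 1) i

/-- Relative (distributional) perimeter of `E` in the open set `A`. -/
noncomputable def perimeterIn (E A : Set (EuclideanSpace ℝ (Fin n))) : ℝ≥0∞ :=
  ⨆ (φ : EuclideanSpace ℝ (Fin n) → EuclideanSpace ℝ (Fin n)) (_ : ContDiff ℝ 1 φ)
    (_ : HasCompactSupport φ) (_ : tsupport φ ⊆ A) (_ : ∀ x, ‖φ x‖ ≤ 1),
    ENNReal.ofReal (∫ x in E, vdiv φ x)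

noncomputable def perimeter (E : Set (EuclideanSpace ℝ (Fin n))) : ℝ≥0∞ :=
  perimeterIn E Set.univ

noncomputable def cheegerConst (Ω : Set (EuclideanSpace ℝ (Fin n))) : ℝ≥0∞ :=
  ⨅ (F : Set (EuclideanSpace ℝ (Fin n))) (_ : MeasurableSet F) (_ : F ⊆ Ω)
    (_ : 0 < volume F), perimeter F / volume F

def IsCheegerSet (Ω E : Set (EuclideanSpace ℝ (Fin n))) : Prop :=
  MeasurableSet E ∧ E ⊆ Ω ∧ 0 < volume E ∧ perimeter E / volume E = cheegerConst Ω

/-! Comparing the Cheeger set `E` with `F ⊆ E ⊆ Ω` gives `P(E) ≤ P(F) + h(Ω) |E \ F|`. To localise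
this, fix a test field `φ` in `B_ρ(x₀)` and a closed ball `K ⊂ B_ρ(x₀)` containing its support and
`E \ F`. A cut-off function gives `P(F) ≤ P(F; B_ρ(x₀)) + P(F; Kᶜ)`, test fields with disjoint
supports add up to `∫_E div φ + P(E; Kᶜ) ≤ P(E)`, and `P(E; Kᶜ) = P(F; Kᶜ)` because `E` and `F`
agree outside `K`. This term is finite when `h(Ω) < ∞`, so it cancels. -/

structure IsTestField (A : Set (EuclideanSpace ℝ (Fin n)))
    (φ : EuclideanSpace ℝ (Fin n) → EuclideanSpace ℝ (Fin n)) : Prop where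
  contDiff : ContDiff ℝ 1 φ
  hasCompactSupport : HasCompactSupport φ
  tsupport_subset : tsupport φ ⊆ A
  norm_le_one : ∀ x, ‖φ x‖ ≤ 1

section Divergence

variable {φ ψ : EuclideanSpace ℝ (Fin n) → EuclideanSpace ℝ (Fin n)}

lemma vdiv_eq_zero_of_notMem_tsupport {x : EuclideanSpace ℝ (Fin n)} (hx : x ∉ tsupport φ) :
    vdiv φ x = 0 := by
  have hφ : fderiv ℝ φ x = 0 := Function.notMem_support.1 fun h => hx (support_fderiv_subset ℝ h)
  simp [vdiv, hφ]

lemma continuous_vdiv (hφ : ContDiff ℝ 1 φ) : Continuous (vdiv φ) :=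
  continuous_finsetSum _ fun i _ =>
    (PiLp.continuous_apply 2 _ i).comp
      ((hφ.continuous_fderiv one_ne_zero).clm_apply continuous_const)

lemma hasCompactSupport_vdiv (hφ : HasCompactSupport φ) : HasCompactSupport (vdiv φ) :=
  hφ.mono' fun _ hx => by_contra fun h => hx (vdiv_eq_zero_of_notMem_tsupport h)

lemma integrableOn_vdiv (hφ : ContDiff ℝ 1 φ) (hφc : HasCompactSupport φ)
    (s : Set (EuclideanSpace ℝ (Fin n))) :
    IntegrableOn (vdiv φ) s :=
  ((continuous_vdiv hφ).integrable_of_hasCompactSupport (hasCompactSupport_vdiv hφc)).integrableOn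

lemma vdiv_add (hφ : ContDiff ℝ 1 φ) (hψ : ContDiff ℝ 1 ψ) : vdiv (φ + ψ) = vdiv φ + vdiv ψ := by
  ext x
  simp only [vdiv, Pi.add_apply, fderiv_add (hφ.differentiable one_ne_zero x)
    (hψ.differentiable one_ne_zero x), ← Finset.sum_add_distrib]
  rfl

lemma setIntegral_vdiv_add {A B : Set (EuclideanSpace ℝ (Fin n))} (hφ : IsTestField A φ)
    (hψ : IsTestField B ψ) (s : Set (EuclideanSpace ℝ (Fin n))) :
    ∫ x in s, vdiv (φ + ψ) x = (∫ x in s, vdiv φ x) + ∫ x in s, vdiv ψ x := by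
  rw [vdiv_add hφ.contDiff hψ.contDiff]
  exact integral_add (integrableOn_vdiv hφ.contDiff hφ.hasCompactSupport s)
    (integrableOn_vdiv hψ.contDiff hψ.hasCompactSupport s)

end Divergence

namespace IsTestField

variable {A B : Set (EuclideanSpace ℝ (Fin n))}
  {φ ψ : EuclideanSpace ℝ (Fin n) → EuclideanSpace ℝ (Fin n)}

lemma zero : IsTestField A 0 :=
  ⟨contDiff_const, HasCompactSupport.zero, by simp, by simp⟩

lemma of_tsupport_subset (hφ : IsTestField A φ) (h : tsupport φ ⊆ B) : IsTestField B φ :=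
  ⟨hφ.contDiff, hφ.hasCompactSupport, h, hφ.norm_le_one⟩

lemma mono (hφ : IsTestField A φ) (hAB : A ⊆ B) : IsTestField B φ :=
  hφ.of_tsupport_subset (hφ.tsupport_subset.trans hAB)

lemma add (hφ : IsTestField A φ) (hψ : IsTestField B ψ) (hAB : Disjoint A B) :
    IsTestField (A ∪ B) (φ + ψ) := by
  refine ⟨hφ.contDiff.add hψ.contDiff, hφ.hasCompactSupport.add hψ.hasCompactSupport,
    (tsupport_add φ ψ).trans (union_subset_union hφ.tsupport_subset hψ.tsupport_subset),
    fun x => ?_⟩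
  by_cases hx : x ∈ tsupport φ
  · have : ψ x = 0 := image_eq_zero_of_notMem_tsupport fun h =>
      hAB.notMem_of_mem_left (hφ.tsupport_subset hx) (hψ.tsupport_subset h)
    simpa [this] using hφ.norm_le_one x
  · simpa [image_eq_zero_of_notMem_tsupport hx] using hψ.norm_le_one x

lemma smul (hψ : IsTestField A ψ) {g : EuclideanSpace ℝ (Fin n) → ℝ} (hg : ContDiff ℝ 1 g)
    (hg1 : ∀ x, |g x| ≤ 1) :
    IsTestField (tsupport g) fun x => g x • ψ x := by
  refine ⟨hg.smul hψ.contDiff, hψ.hasCompactSupport.smul_left (f := g),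
    tsupport_smul_subset_left g ψ, fun x => ?_⟩
  rw [norm_smul, Real.norm_eq_abs]
  exact mul_le_one₀ (hg1 x) (norm_nonneg _) (hψ.norm_le_one x)

end IsTestField

section Perimeter

variable {E F A B : Set (EuclideanSpace ℝ (Fin n))}
  {φ : EuclideanSpace ℝ (Fin n) → EuclideanSpace ℝ (Fin n)}

lemma perimeterIn_eq_iSup (E A : Set (EuclideanSpace ℝ (Fin n))) :
    perimeterIn E A = ⨆ φ : {φ // IsTestField A φ}, ENNReal.ofReal (∫ x in E, vdiv φ.1 x) := by
  simp only [perimeterIn, iSup_subtype]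
  refine iSup_congr fun φ => le_antisymm ?_ ?_
  · exact iSup_le fun h₁ => iSup_le fun h₂ => iSup_le fun h₃ => iSup_le fun h₄ =>
      le_iSup_of_le ⟨h₁, h₂, h₃, h₄⟩ le_rfl
  · exact iSup_le fun h => le_iSup_of_le h.1 <| le_iSup_of_le h.2 <| le_iSup_of_le h.3 <|
      le_iSup_of_le h.4 le_rfl

lemma le_perimeterIn (hφ : IsTestField A φ) :
    ENNReal.ofReal (∫ x in E, vdiv φ x) ≤ perimeterIn E A := by
  rw [perimeterIn_eq_iSup]
  exact le_iSup_of_le ⟨φ, hφ⟩ le_rfl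

lemma perimeterIn_le {c : ℝ≥0∞}
    (h : ∀ φ, IsTestField A φ → ENNReal.ofReal (∫ x in E, vdiv φ x) ≤ c) :
    perimeterIn E A ≤ c := by
  rw [perimeterIn_eq_iSup]
  exact iSup_le fun φ => h φ.1 φ.2

lemma setIntegral_inter_vdiv (hE : MeasurableSet E) (hφ : IsTestField A φ) :
    ∫ x in E ∩ A, vdiv φ x = ∫ x in E, vdiv φ x :=
  (setIntegral_eq_of_subset_of_forall_sdiff_eq_zero hE inter_subset_left fun _ hx =>
    vdiv_eq_zero_of_notMem_tsupport fun h => hx.2 ⟨hx.1, hφ.tsupport_subset h⟩).symm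

lemma perimeterIn_congr (hE : MeasurableSet E) (hF : MeasurableSet F)
    (h : (E ∩ A : Set (EuclideanSpace ℝ (Fin n))) =ᵐ[volume] (F ∩ A : Set _)) :
    perimeterIn E A = perimeterIn F A := by
  simp only [perimeterIn_eq_iSup]
  refine iSup_congr fun φ => ?_
  rw [← setIntegral_inter_vdiv hE φ.2, ← setIntegral_inter_vdiv hF φ.2, setIntegral_congr_set h]

lemma perimeterIn_add_perimeterIn_le (hAB : Disjoint A B) :
    perimeterIn E A + perimeterIn E B ≤ perimeterIn E (A ∪ B) := by
  have : Nonempty {φ // IsTestField A φ} := ⟨⟨0, .zero⟩⟩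
  have : Nonempty {φ // IsTestField B φ} := ⟨⟨0, .zero⟩⟩
  rw [perimeterIn_eq_iSup E A, perimeterIn_eq_iSup E B]
  refine ENNReal.iSup_add_iSup_le fun ⟨φ, hφ⟩ ⟨ψ, hψ⟩ => ?_
  rcases le_or_gt (∫ x in E, vdiv φ x) 0 with hφ0 | hφ0
  · rw [ofReal_of_nonpos hφ0, zero_add]
    exact le_perimeterIn (hψ.mono subset_union_right)
  rcases le_or_gt (∫ x in E, vdiv ψ x) 0 with hψ0 | hψ0
  · rw [ofReal_of_nonpos hψ0, add_zero]
    exact le_perimeterIn (hφ.mono subset_union_left)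
  rw [← ofReal_add hφ0.le hψ0.le, ← setIntegral_vdiv_add hφ hψ]
  exact le_perimeterIn (hφ.add hψ hAB)

lemma perimeter_le_perimeterIn_ball_add (E : Set (EuclideanSpace ℝ (Fin n)))
    (x : EuclideanSpace ℝ (Fin n)) {r ρ : ℝ} (hrρ : r < ρ) :
    perimeter E ≤ perimeterIn E (ball x ρ) + perimeterIn E (closedBall x r)ᶜ := by
  rcases lt_or_ge r 0 with hr | hr
  · rw [closedBall_eq_empty.2 hr, compl_empty]
    exact le_add_self
  obtain ⟨a, b, hra, hab, hbρ⟩ : ∃ a b, r < a ∧ a < b ∧ b < ρ :=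
    ⟨(2 * r + ρ) / 3, (r + 2 * ρ) / 3, by linarith, by linarith, by linarith⟩
  let η : ContDiffBump x := ⟨a, b, hr.trans_lt hra, hab⟩
  have hη : ∀ y, |η y| ≤ 1 := fun y => (abs_of_nonneg η.nonneg).trans_le η.le_one
  have hη' : ∀ y, |1 - η y| ≤ 1 := fun y =>
    abs_le.2 ⟨by linarith [η.le_one (x := y)], by linarith [η.nonneg (x := y)]⟩
  have hsupp : tsupport (fun y => 1 - η y) ⊆ (closedBall x r)ᶜ := by
    have : Function.support (fun y => 1 - η y) ⊆ (ball x a)ᶜ := fun y hy hya =>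
      hy (by simp [η.one_of_mem_closedBall (ball_subset_closedBall hya)])
    exact (closure_minimal this isOpen_ball.isClosed_compl).trans
      (compl_subset_compl.2 (closedBall_subset_ball hra))
  refine perimeterIn_le fun ψ hψ => ?_
  have h₁ : IsTestField (ball x ρ) fun y => η y • ψ y := (hψ.smul η.contDiff hη).mono <| by
    rw [η.tsupport_eq]
    exact closedBall_subset_ball hbρ
  have h₂ : IsTestField (closedBall x r)ᶜ fun y => (1 - η y) • ψ y :=
    (hψ.smul (contDiff_const.sub η.contDiff) hη').mono hsupp
  have hψ_eq : ψ = (fun y => η y • ψ y) + fun y => (1 - η y) • ψ y := by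
    ext1 y
    simp [← add_smul]
  rw [hψ_eq, setIntegral_vdiv_add h₁ h₂]
  exact ofReal_add_le.trans (add_le_add (le_perimeterIn h₁) (le_perimeterIn h₂))

lemma perimeterIn_closedBall_le_of_perimeter_le {c : ℝ≥0∞} {x : EuclideanSpace ℝ (Fin n)}
    {r ρ : ℝ} (hE : MeasurableSet E) (hF : MeasurableSet F) (hFE : F ⊆ E)
    (hEF : E \ F ⊆ closedBall x r) (hrρ : r < ρ) (hPE : perimeter E ≠ ⊤)
    (hle : perimeter E ≤ perimeter F + c) :
    perimeterIn E (closedBall x r) ≤ perimeterIn F (ball x ρ) + c := by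
  set K := closedBall x r
  have hout : E ∩ Kᶜ = F ∩ Kᶜ :=
    subset_antisymm (fun y ⟨hyE, hyK⟩ => ⟨by_contra fun hyF => hyK (hEF ⟨hyE, hyF⟩), hyK⟩)
      (inter_subset_inter_left _ hFE)
  have hsplit : perimeterIn E K + perimeterIn F Kᶜ ≤ perimeter E := by
    rw [← perimeterIn_congr hE hF hout.eventuallyEq, perimeter, ← union_compl_self K]
    exact perimeterIn_add_perimeterIn_le disjoint_compl_right
  have hfin : perimeterIn F Kᶜ ≠ ⊤ := ne_top_of_le_ne_top hPE (le_add_self.trans hsplit)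
  refine (ENNReal.add_le_add_iff_right hfin).1 ?_
  calc perimeterIn E K + perimeterIn F Kᶜ ≤ perimeter E := hsplit
    _ ≤ perimeter F + c := hle
    _ ≤ perimeterIn F (ball x ρ) + perimeterIn F Kᶜ + c := by
      gcongr
      exact perimeter_le_perimeterIn_ball_add F x hrρ
    _ = perimeterIn F (ball x ρ) + c + perimeterIn F Kᶜ := add_right_comm _ _ _

end Perimeter

section Cheeger

variable {Ω E F : Set (EuclideanSpace ℝ (Fin n))}

lemma cheegerConst_mul_volume_le (hF : MeasurableSet F) (hFΩ : F ⊆ Ω) :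
    cheegerConst Ω * volume F ≤ perimeter F := by
  rcases eq_zero_or_pos (volume F) with h0 | hpos
  · simp [h0]
  exact mul_le_of_le_div <|
    iInf_le_of_le F <| iInf_le_of_le hF <| iInf_le_of_le hFΩ <| iInf_le _ hpos

lemma IsCheegerSet.perimeter_eq_mul (hE : IsCheegerSet Ω E) (hfin : volume E ≠ ⊤) :
    perimeter E = cheegerConst Ω * volume E := by
  rw [← hE.2.2.2, ENNReal.div_mul_cancel hE.2.2.1.ne' hfin]

lemma IsCheegerSet.perimeter_le_add (hE : IsCheegerSet Ω E) (hfin : volume E ≠ ⊤)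
    (hF : MeasurableSet F) (hFE : F ⊆ E) :
    perimeter E ≤ perimeter F + cheegerConst Ω * volume (E \ F) :=
  calc perimeter E = cheegerConst Ω * volume F + cheegerConst Ω * volume (E \ F) := by
        rw [hE.perimeter_eq_mul hfin, ← mul_add, measure_add_sdiff hF.nullMeasurableSet,
          union_eq_self_of_subset_left hFE]
    _ ≤ _ := by
      gcongr
      exact cheegerConst_mul_volume_le hF (hFE.trans hE.2.1)

end Cheeger

theorem cheeger_set_variational_curvature_bound_general (Ω E : Set (EuclideanSpace ℝ (Fin n)))
    (hΩb : Bornology.IsBounded Ω) (hE : IsCheegerSet Ω E)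
    (x₀ : EuclideanSpace ℝ (Fin n)) (ρ : ℝ)
    (F : Set (EuclideanSpace ℝ (Fin n))) (hF : MeasurableSet F) (hFE : F ⊆ E)
    (hcc : closure (symmDiff F E) ⊆ Metric.ball x₀ ρ) :
    perimeterIn E (Metric.ball x₀ ρ) ≤
      perimeterIn F (Metric.ball x₀ ρ) + cheegerConst Ω * volume (E \ F) := by
  rw [symmDiff_of_le hFE] at hcc
  by_cases htop : cheegerConst Ω = ⊤
  · rcases eq_or_ne (volume (E \ F)) 0 with h0 | h0
    · have hae : E =ᵐ[volume] F := ae_eq_set.2 ⟨h0, by simp [sdiff_eq_empty.2 hFE]⟩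
      exact (perimeterIn_congr hE.1 hF (ae_eq_set_inter hae ae_eq_rfl)).trans_le le_self_add
    · simp [htop, h0]
  have hfin : volume E ≠ ⊤ := ne_top_of_le_ne_top hΩb.measure_lt_top.ne (measure_mono hE.2.1)
  have hPE : perimeter E ≠ ⊤ := by
    rw [hE.perimeter_eq_mul hfin]
    exact mul_ne_top htop hfin
  refine perimeterIn_le fun φ hφ => ?_
  obtain ⟨r, hrρ, hr⟩ := exists_lt_subset_ball ((isClosed_tsupport φ).union isClosed_closure)
    (union_subset hφ.tsupport_subset hcc)
  obtain ⟨hφK, hEFK⟩ := union_subset_iff.1 (hr.trans ball_subset_closedBall)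
  calc ENNReal.ofReal (∫ x in E, vdiv φ x) ≤ perimeterIn E (closedBall x₀ r) :=
        le_perimeterIn (hφ.of_tsupport_subset hφK)
    _ ≤ _ := perimeterIn_closedBall_le_of_perimeter_le hE.1 hF hFE (subset_closure.trans hEFK)
        hrρ hPE (hE.perimeter_le_add hfin hF hFE)

theorem cheeger_set_variational_curvature_bound (Ω E : Set (EuclideanSpace ℝ (Fin n)))
    (hΩo : IsOpen Ω) (hΩb : Bornology.IsBounded Ω) (hE : IsCheegerSet Ω E)
    (x₀ : EuclideanSpace ℝ (Fin n)) (ρ : ℝ) (hρ : 0 < ρ)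
    (F : Set (EuclideanSpace ℝ (Fin n))) (hF : MeasurableSet F) (hFE : F ⊆ E)
    (hcc : closure (symmDiff F E) ⊆ Metric.ball x₀ ρ)
    (hcpt : IsCompact (closure (symmDiff F E))) :
    perimeterIn E (Metric.ball x₀ ρ) ≤
      perimeterIn F (Metric.ball x₀ ρ) + cheegerConst Ω * volume (E \ F) :=
  cheeger_set_variational_curvature_bound_general Ω E hΩb hE x₀ ρ F hF hFE hcc
end

section
/- Suppose E ⊂ ℝ² is a Jordan domain with curvature bounded from above by 1 in the viscosity sense, and let x ∈ E be a cut point. Then at least one of the following holds: (1) the projection set P_x contains more than one point; (2) x is a focal point. -/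
open MeasureTheory Metric Set ENNReal Filter

def IsJordanCurve (Γ : Set (EuclideanSpace ℝ (Fin 2))) : Prop :=
  Nonempty (↥(Metric.sphere (0 : EuclideanSpace ℝ (Fin 2)) 1) ≃ₜ ↥Γ)

def IsJordanDomain (Ω : Set (EuclideanSpace ℝ (Fin 2))) : Prop :=
  ∃ Γ : Set (EuclideanSpace ℝ (Fin 2)), IsJordanCurve Γ ∧ IsOpen Ω ∧
    Bornology.IsBounded Ω ∧ IsConnected Ω ∧ frontier Ω = Γ ∧
    ∀ x ∈ Ω, connectedComponentIn Γᶜ x = Ω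

/-- `E` has curvature bounded above by `h` in the viscosity sense at the point `x ∈ ∂E`. -/
def ViscCurvLEAt (E : Set (EuclideanSpace ℝ (Fin 2))) (h : ℝ) (x : EuclideanSpace ℝ (Fin 2)) :
    Prop :=
  ∀ (y : EuclideanSpace ℝ (Fin 2)) (ρ : ℝ), 0 < ρ → x ∈ Metric.sphere y ρ →
    (∃ ε > 0, E ∩ Metric.ball x ε ⊆ Metric.closedBall y ρ) → 1 / h ≤ ρ

/-- `E` has curvature bounded above by `h` in the viscosity sense. -/
def ViscCurvLE (E : Set (EuclideanSpace ℝ (Fin 2))) (h : ℝ) : Prop :=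
  ∀ x ∈ frontier E, ViscCurvLEAt E h x

/-- The projection set `P_x = {y ∈ ∂E : |x − y| = dist(x, ∂E)}`. -/
def projSet (E : Set (EuclideanSpace ℝ (Fin 2))) (x : EuclideanSpace ℝ (Fin 2)) :
    Set (EuclideanSpace ℝ (Fin 2)) :=
  {y ∈ frontier E | dist x y = Metric.infDist x (frontier E)}

/-- The point `z_{x,y}(t) = x + t(x − y)`. -/
noncomputable def zpt (x y : EuclideanSpace ℝ (Fin 2)) (t : ℝ) : EuclideanSpace ℝ (Fin 2) :=
  x + t • (x - y)

/-- `x` is a cut point of `E`. -/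
def IsCutPoint (E : Set (EuclideanSpace ℝ (Fin 2))) (x : EuclideanSpace ℝ (Fin 2)) : Prop :=
  ∃ y ∈ projSet E x,
    sSup {t : ℝ | dist (zpt x y t) y = Metric.infDist (zpt x y t) (frontier E)} = 0

/-- `x` is a focal point of `E`, with focal projection `y`: the supremum of the `t` such that
`y` is a local minimizer of `dist(z_{x,y}(t), ·)` among points of `∂E` equals `0`. -/
def IsFocalPoint (E : Set (EuclideanSpace ℝ (Fin 2))) (x : EuclideanSpace ℝ (Fin 2)) : Prop :=
  ∃ y ∈ projSet E x,
    sSup {t : ℝ | ∃ δ > 0, ∀ w ∈ frontier E ∩ Metric.ball y δ,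
      dist (zpt x y t) y ≤ dist (zpt x y t) w} = 0


/-!
If `y` is the only projection of `x` but not a focal projection, then `y` is a local nearest
boundary point of `z_{x,y}(t₀)` for some `t₀ > 0`, hence (triangle inequality along the ray) of
every `z_{x,y}(t)` with `0 ≤ t ≤ t₀`. Boundary points outside a neighbourhood of `y` are farther
from `x` than `y` by a fixed margin, because `∂E` is closed and `y` is the unique projection, and
this margin survives moving `x` a little along the ray. So `y` is a nearest boundary point of
`z_{x,y}(t)` for small `t > 0`, contradicting that `x` is a cut point.
-/

lemma dist_le_dist_of_dist_add_dist_eq {α : Type*} [PseudoMetricSpace α] {p q y w : α}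
    (hq : dist p q + dist q y = dist p y) (hw : dist p y ≤ dist p w) : dist q y ≤ dist q w := by
  linarith [dist_triangle p q w]

lemma exists_pos_add_le_dist_of_unique_infDist {α : Type*} [PseudoMetricSpace α] [ProperSpace α]
    {S : Set α} {x y : α} (hS : IsClosed S)
    (huniq : ∀ w ∈ S, dist x w = infDist x S → w = y) (hy : dist x y = infDist x S)
    {δ : ℝ} (hδ : 0 < δ) : ∃ η > 0, ∀ w ∈ S, δ ≤ dist w y → dist x y + η ≤ dist x w := by
  rcases (S \ ball y δ).eq_empty_or_nonempty with hK | hK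
  · refine ⟨1, one_pos, fun w hw hwy => ?_⟩
    exact absurd (hK.subset ⟨hw, by simpa using hwy⟩) (notMem_empty w)
  obtain ⟨w₀, ⟨hw₀S, hw₀y⟩, hw₀⟩ := (hS.sdiff isOpen_ball).exists_infDist_eq_dist hK x
  have hlt : dist x y < dist x w₀ := by
    refine (hy ▸ infDist_le_dist_of_mem hw₀S).lt_of_ne fun h => hw₀y ?_
    rw [huniq w₀ hw₀S (h.symm.trans hy)]
    exact mem_ball_self hδ
  refine ⟨dist x w₀ - dist x y, by linarith, fun w hw hwy => ?_⟩
  have : dist x w₀ ≤ dist x w := hw₀ ▸ infDist_le_dist_of_mem ⟨hw, by simpa using hwy⟩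
  linarith

section Ray

variable {x y : EuclideanSpace ℝ (Fin 2)}

lemma zpt_zero (x y : EuclideanSpace ℝ (Fin 2)) : zpt x y 0 = x := by simp [zpt]

lemma dist_zpt_zpt (x y : EuclideanSpace ℝ (Fin 2)) (s t : ℝ) :
    dist (zpt x y s) (zpt x y t) = |s - t| * dist x y := by
  have h : zpt x y s - zpt x y t = (s - t) • (x - y) := by simp only [zpt]; module
  rw [dist_eq_norm, h, norm_smul, Real.norm_eq_abs, dist_eq_norm]

lemma dist_zpt_left {t : ℝ} (ht : 0 ≤ t) : dist x (zpt x y t) = t * dist x y := by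
  simpa [zpt_zero, abs_of_nonneg ht] using dist_zpt_zpt x y 0 t

lemma dist_zpt_right {t : ℝ} (ht : 0 ≤ t) : dist (zpt x y t) y = (1 + t) * dist x y := by
  have h : zpt x y t - y = (1 + t) • (x - y) := by simp only [zpt]; module
  rw [dist_eq_norm, h, norm_smul, Real.norm_eq_abs, abs_of_nonneg (by linarith), dist_eq_norm]

lemma dist_zpt_add_dist_zpt {s t : ℝ} (hs : 0 ≤ s) (hst : s ≤ t) :
    dist (zpt x y t) (zpt x y s) + dist (zpt x y s) y = dist (zpt x y t) y := by
  rw [dist_zpt_zpt, abs_of_nonneg (sub_nonneg.2 hst), dist_zpt_right hs,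
    dist_zpt_right (hs.trans hst)]
  ring

/-- The `t` in the supremum defining a cut point, with `S` in place of `∂E`. -/
def cutTimes (S : Set (EuclideanSpace ℝ (Fin 2))) (x y : EuclideanSpace ℝ (Fin 2)) : Set ℝ :=
  {t | dist (zpt x y t) y = infDist (zpt x y t) S}

/-- The `t` in the supremum defining a focal point, with `S` in place of `∂E`. -/
def focalTimes (S : Set (EuclideanSpace ℝ (Fin 2))) (x y : EuclideanSpace ℝ (Fin 2)) : Set ℝ :=
  {t | ∃ δ > 0, ∀ w ∈ S ∩ ball y δ, dist (zpt x y t) y ≤ dist (zpt x y t) w}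

variable {S : Set (EuclideanSpace ℝ (Fin 2))}

lemma cutTimes_subset_focalTimes : cutTimes S x y ⊆ focalTimes S x y :=
  fun _ ht => ⟨1, one_pos, fun _ hw => ht ▸ infDist_le_dist_of_mem hw.1⟩

lemma zero_mem_cutTimes (hy : dist x y = infDist x S) : 0 ∈ cutTimes S x y := by
  simpa [cutTimes, zpt_zero] using hy

lemma mem_cutTimes_of_forall_dist_le (hy : y ∈ S) {t : ℝ}
    (h : ∀ w ∈ S, dist (zpt x y t) y ≤ dist (zpt x y t) w) : t ∈ cutTimes S x y :=
  le_antisymm ((le_infDist ⟨y, hy⟩).2 h) (infDist_le_dist_of_mem hy)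

lemma dist_zpt_le_dist_of_le {t₀ δ : ℝ}
    (hδ : ∀ w ∈ S ∩ ball y δ, dist (zpt x y t₀) y ≤ dist (zpt x y t₀) w)
    {t : ℝ} (ht : 0 ≤ t) (htt₀ : t ≤ t₀) {w : EuclideanSpace ℝ (Fin 2)} (hw : w ∈ S ∩ ball y δ) :
    dist (zpt x y t) y ≤ dist (zpt x y t) w :=
  dist_le_dist_of_dist_add_dist_eq (dist_zpt_add_dist_zpt ht htt₀) (hδ w hw)

lemma dist_zpt_le_of_add_le_dist {η t : ℝ} {w : EuclideanSpace ℝ (Fin 2)}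
    (hw : dist x y + η ≤ dist x w) (ht : 0 ≤ t) (htη : 2 * (t * dist x y) ≤ η) :
    dist (zpt x y t) y ≤ dist (zpt x y t) w := by
  rw [dist_zpt_right ht]
  linarith [dist_triangle x (zpt x y t) w, dist_zpt_left (x := x) (y := y) ht]

lemma exists_pos_mem_cutTimes (hS : IsClosed S) (hy : y ∈ S) (hxy : x ≠ y)
    (hproj : dist x y = infDist x S) (huniq : ∀ w ∈ S, dist x w = infDist x S → w = y)
    {t₀ : ℝ} (ht₀ : 0 < t₀) (hfocal : t₀ ∈ focalTimes S x y) :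
    ∃ t > 0, t ∈ cutTimes S x y := by
  obtain ⟨δ, hδ, hnear⟩ := hfocal
  obtain ⟨η, hη, hfar⟩ := exists_pos_add_le_dist_of_unique_infDist hS huniq hproj hδ
  have hd : 0 < dist x y := dist_pos.2 hxy
  set t := min t₀ (η / (2 * dist x y))
  have ht : 0 < t := lt_min ht₀ (by positivity)
  refine ⟨t, ht, mem_cutTimes_of_forall_dist_le hy fun w hw => ?_⟩
  by_cases hwy : dist w y < δ
  · exact dist_zpt_le_dist_of_le hnear ht.le (min_le_left _ _) ⟨hw, hwy⟩
  · have htη : t * dist x y ≤ η / (2 * dist x y) * dist x y :=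
      mul_le_mul_of_nonneg_right (min_le_right _ _) hd.le
    rw [div_mul_eq_mul_div, mul_div_mul_right _ _ hd.ne'] at htη
    exact dist_zpt_le_of_add_le_dist (hfar w hw (not_lt.1 hwy)) ht.le (by linarith)

lemma sSup_focalTimes_eq_zero (hS : IsClosed S) (hy : y ∈ S) (hxy : x ≠ y)
    (hproj : dist x y = infDist x S) (huniq : ∀ w ∈ S, dist x w = infDist x S → w = y)
    (hcut : sSup (cutTimes S x y) = 0) : sSup (focalTimes S x y) = 0 := by
  -- If the focal times are unbounded above, their `sSup` is `0` by convention.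
  by_cases hbdd : BddAbove (focalTimes S x y)
  swap
  · exact Real.sSup_of_not_bddAbove hbdd
  have h0 : 0 ∈ focalTimes S x y := cutTimes_subset_focalTimes (zero_mem_cutTimes hproj)
  refine le_antisymm (not_lt.1 fun hpos => ?_) (le_csSup hbdd h0)
  obtain ⟨t₀, ht₀, hlt⟩ := exists_lt_of_lt_csSup ⟨0, h0⟩ hpos
  obtain ⟨t, ht, htcut⟩ := exists_pos_mem_cutTimes hS hy hxy hproj huniq hlt ht₀
  have := le_csSup (hbdd.mono cutTimes_subset_focalTimes) htcut
  linarith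

end Ray

theorem cut_point_multiple_projections_or_focal_general (E : Set (EuclideanSpace ℝ (Fin 2)))
    (hE : IsJordanDomain E)
    (x : EuclideanSpace ℝ (Fin 2)) (hx : x ∈ E) (hcut : IsCutPoint E x) :
    (projSet E x).Nontrivial ∨ IsFocalPoint E x := by
  obtain ⟨-, -, hopen, -⟩ := hE
  obtain ⟨y, hy, hycut⟩ := hcut
  refine or_iff_not_imp_left.2 fun hP => ⟨y, hy, ?_⟩
  have hxy : x ≠ y := by
    rintro rfl
    exact (hopen.frontier_eq ▸ hy.1).2 hx
  have huniq : ∀ w ∈ frontier E, dist x w = infDist x (frontier E) → w = y :=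
    fun w hw hxw => not_nontrivial_iff.1 hP ⟨hw, hxw⟩ hy
  exact sSup_focalTimes_eq_zero isClosed_frontier hy.1 hxy hy.2 huniq hycut

theorem cut_point_multiple_projections_or_focal (E : Set (EuclideanSpace ℝ (Fin 2)))
    (hE : IsJordanDomain E) (hcurv : ViscCurvLE E 1)
    (x : EuclideanSpace ℝ (Fin 2)) (hx : x ∈ E) (hcut : IsCutPoint E x) :
    (projSet E x).Nontrivial ∨ IsFocalPoint E x :=
  cut_point_multiple_projections_or_focal_general E hE x hx hcut
end
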